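/- Let p be a prime and let λ = (λ_1, …, λ_n) and μ = (μ_1, …, μ_m) be partitions (with all parts ≥ 1) such that N_k(λ; p) = N_k(μ; p) for every k ≥ 0, i.e., ζ_λ(s) = ζ_μ(s) for the zeta functions of the abelian p-groups G_λ(p) and G_μ(p). Then λ = μ. -/

import Mathlib

/-- `Nk p l k` is the number of subgroups of order `p^k` of the abelian `p`-group
`G_λ(p) = ℤ/p^{λ_1}ℤ × ⋯ × ℤ/p^{λ_n}ℤ`, where `λ` is given by the list `l`
(so the zeta function of `λ` is `ζ_λ(s) = Σ_k N_k(λ; p) p^{-ks}`). -/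
noncomputable def Nk (p : ℕ) (l : List ℕ) (k : ℕ) : ℕ :=
  Nat.card {H : AddSubgroup (∀ i : Fin l.length, ZMod (p ^ l.get i)) // Nat.card H = p ^ k}

/-!
Write `G[n]` for the `n`-torsion subgroup of a finite abelian group `G`. A subgroup of order
`p^(k+1)` either lies in `G[p^k]` or is cyclic, and the elements of order `p^(k+1)` are exactly
the generators of the cyclic ones. So the number of subgroups of order `p^(k+1)`, together with
the isomorphism type of `G[p^k]`, determines `|G[p^(k+1)]|`. For `G = G_λ(p)` we have
`G[p^k] ≅ G_{min(λ,k)}(p)` and `|G[p^k]| = p^(Σ_i min(λ_i, k))`, so by induction on `k` two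
partitions with the same subgroup counts have the same truncations `min(λ, k)`; for `k ≥ λ_1`
the truncation is `λ` itself.
-/

open AddSubgroup (torsionBy zmultiples)

theorem Nat.card_subtype_and_add_card_subtype_and_not {α : Type*} [Finite α]
    (P Q : α → Prop) :
    Nat.card {x // P x ∧ Q x} + Nat.card {x // P x ∧ ¬ Q x} = Nat.card {x // P x} := by
  classical
  rw [← Nat.card_sum]
  exact Nat.card_congr <|
    (Equiv.sumCongr (Equiv.subtypeSubtypeEquivSubtypeInter P Q).symm
      (Equiv.subtypeSubtypeEquivSubtypeInter P (¬ Q ·)).symm).trans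
    (Equiv.sumCompl fun x : {x // P x} => Q x)

noncomputable def numAddSubgroupsOfCard (G : Type*) [AddGroup G] (c : ℕ) : ℕ :=
  Nat.card {H : AddSubgroup G // Nat.card H = c}

theorem numAddSubgroupsOfCard_congr {G G' : Type*} [AddGroup G] [AddGroup G'] (e : G ≃+ G')
    (c : ℕ) : numAddSubgroupsOfCard G c = numAddSubgroupsOfCard G' c :=
  Nat.card_congr <| (AddEquiv.mapAddSubgroup e).toEquiv.subtypeEquiv fun H => by
    show _ ↔ Nat.card (H.map e.toAddMonoidHom) = c
    rw [AddSubgroup.card_map_of_injective e.injective]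

section AddGroup

variable {G : Type*} [AddGroup G]

theorem numAddSubgroupsOfCard_eq_add [Finite G] (K : AddSubgroup G) (c : ℕ) :
    numAddSubgroupsOfCard G c =
      numAddSubgroupsOfCard K c +
        Nat.card {H : AddSubgroup G // Nat.card H = c ∧ ¬ H ≤ K} := by
  rw [numAddSubgroupsOfCard, ← Nat.card_subtype_and_add_card_subtype_and_not _ (· ≤ K)]
  congr 1
  exact Nat.card_congr <|
    (((AddSubgroup.MapSubtype.orderIso K).toEquiv.subtypeEquiv fun H => by
      show _ ↔ Nat.card (H.map K.subtype) = c
      rw [AddSubgroup.card_map_of_injective K.subtype_injective]).trans <|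
    (Equiv.subtypeSubtypeEquivSubtypeInter (· ≤ K) (Nat.card · = c)).trans <|
    Equiv.subtypeEquivRight fun _ => and_comm).symm

theorem zmultiples_eq_iff_mem_and_addOrderOf_eq {H : AddSubgroup G} [Finite H] {x : G} :
    zmultiples x = H ↔ x ∈ H ∧ addOrderOf x = Nat.card H := by
  refine ⟨fun h => ⟨h ▸ AddSubgroup.mem_zmultiples x, by rw [← Nat.card_zmultiples, h]⟩,
    fun ⟨hx, hord⟩ => AddSubgroup.eq_of_le_of_card_ge (AddSubgroup.zmultiples_le.2 hx) ?_⟩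
  rw [Nat.card_zmultiples, hord]

theorem IsAddCyclic.natCard_addOrderOf_eq_totient [Finite G] [IsAddCyclic G] :
    Nat.card {x : G // addOrderOf x = Nat.card G} = (Nat.card G).totient := by
  classical
  have := Fintype.ofFinite G
  rw [Nat.card_eq_fintype_card, Fintype.card_subtype, Nat.card_eq_fintype_card]
  exact IsAddCyclic.card_addOrderOf_eq_totient dvd_rfl

theorem card_generators_eq_totient (H : AddSubgroup G) [Finite H] [IsAddCyclic H] :
    Nat.card {x : G // zmultiples x = H} = (Nat.card H).totient := by
  rw [← IsAddCyclic.natCard_addOrderOf_eq_totient]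
  exact Nat.card_congr <|
    (Equiv.subtypeEquivRight fun _ => zmultiples_eq_iff_mem_and_addOrderOf_eq).trans <|
    (Equiv.subtypeSubtypeEquivSubtypeInter (· ∈ H) (addOrderOf · = Nat.card H)).symm.trans <|
    Equiv.subtypeEquivRight fun _ => by rw [AddSubgroup.addOrderOf_coe]

theorem card_addOrderOf_eq_mul_totient [Finite G] (n : ℕ) :
    Nat.card {x : G // addOrderOf x = n} =
      Nat.card {H : AddSubgroup G // IsAddCyclic H ∧ Nat.card H = n} * n.totient := by
  have := Fintype.ofFinite {H : AddSubgroup G // IsAddCyclic H ∧ Nat.card H = n}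
  let byZMultiples : {x : G // addOrderOf x = n} ≃
      Σ H : {H : AddSubgroup G // IsAddCyclic H ∧ Nat.card H = n}, {x : G // zmultiples x = H} :=
    { toFun := fun x =>
        ⟨⟨zmultiples x, inferInstance, by rw [Nat.card_zmultiples, x.2]⟩, x, rfl⟩
      invFun := fun y => ⟨y.2, by rw [← Nat.card_zmultiples, y.2.2, y.1.2.2]⟩
      left_inv := fun _ => rfl
      right_inv := fun y => Sigma.subtype_ext (Subtype.ext y.2.2) rfl }
  rw [Nat.card_congr byZMultiples, Nat.card_sigma, Finset.sum_const_nat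
    fun ⟨H, _, hcard⟩ _ => hcard ▸ card_generators_eq_totient H, Finset.card_univ,
    Nat.card_eq_fintype_card]

end AddGroup

section Torsion

variable {G : Type*} [AddCommGroup G]

theorem card_torsionBy_eq_card_nsmul_eq_zero (n : ℕ) :
    Nat.card (torsionBy G n) = Nat.card {x : G // n • x = 0} :=
  Nat.card_congr <| Equiv.subtypeEquivRight fun _ => AddSubgroup.torsionBy.nsmul_iff

theorem IsAddCyclic.card_torsionBy [Finite G] [IsAddCyclic G] (d : ℕ) :
    Nat.card (torsionBy G d) = (Nat.card G).gcd d := by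
  obtain ⟨g, hg⟩ := IsAddCyclic.exists_generator (α := G)
  obtain ⟨t, ht⟩ := IsAddCyclic.exists_generator (α := torsionBy G d)
  have hg_ord := addOrderOf_eq_card_of_forall_mem_zmultiples hg
  have ht_ord := addOrderOf_eq_card_of_forall_mem_zmultiples ht
  apply Nat.dvd_antisymm
  · exact Nat.dvd_gcd (AddSubgroup.card_addSubgroup_dvd_card _)
      (ht_ord ▸ addOrderOf_dvd_of_nsmul_eq_zero (AddSubgroup.torsionBy.nsmul t))
  · have hord : addOrderOf ((Nat.card G / (Nat.card G).gcd d) • g) = (Nat.card G).gcd d := by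
      rw [← hg_ord]
      exact addOrderOf_nsmul_addOrderOf_sub (hg_ord ▸ Nat.card_pos.ne')
        (hg_ord ▸ Nat.gcd_dvd_left _ _)
    rw [← hord]
    refine AddSubgroup.addOrderOf_dvd_natCard _ (AddSubgroup.torsionBy.nsmul_iff.2 ?_)
    rw [← addOrderOf_dvd_iff_nsmul_eq_zero, hord]
    exact Nat.gcd_dvd_right _ _

variable {p : ℕ} [hp : Fact p.Prime]

theorem isAddCyclic_iff_not_le_torsionBy {k : ℕ} {H : AddSubgroup G} [Finite H]
    (hH : Nat.card H = p ^ (k + 1)) : IsAddCyclic H ↔ ¬ H ≤ torsionBy G (p ^ k : ℕ) := by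
  constructor
  · intro _ hle
    obtain ⟨g, hg⟩ := IsAddCyclic.exists_generator (α := H)
    have hord : addOrderOf g = p ^ (k + 1) :=
      (addOrderOf_eq_card_of_forall_mem_zmultiples hg).trans hH
    have hdvd : addOrderOf g ∣ p ^ k :=
      addOrderOf_dvd_of_nsmul_eq_zero (Subtype.ext (AddSubgroup.torsionBy.nsmul_iff.1 (hle g.2)))
    rw [hord, Nat.pow_dvd_pow_iff_le_right hp.out.one_lt] at hdvd
    omega
  · intro hnle
    obtain ⟨x, hxH, hx⟩ := SetLike.not_le_iff_exists.1 hnle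
    refine isAddCyclic_of_addOrderOf_eq_card ⟨x, hxH⟩ ?_
    rw [AddSubgroup.addOrderOf_mk, hH]
    exact addOrderOf_eq_prime_pow (AddSubgroup.torsionBy.nsmul_iff.not.1 hx)
      (addOrderOf_dvd_iff_nsmul_eq_zero.1 (hH ▸ H.addOrderOf_dvd_natCard hxH))

theorem numAddSubgroupsOfCard_pow_succ [Finite G] (k : ℕ) :
    numAddSubgroupsOfCard G (p ^ (k + 1)) =
      numAddSubgroupsOfCard (torsionBy G (p ^ k : ℕ)) (p ^ (k + 1)) +
        Nat.card {H : AddSubgroup G // IsAddCyclic H ∧ Nat.card H = p ^ (k + 1)} := by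
  rw [numAddSubgroupsOfCard_eq_add (torsionBy G (p ^ k : ℕ))]
  exact congrArg _ <| Nat.card_congr <| Equiv.subtypeEquivRight fun H =>
    ⟨fun ⟨hH, hnle⟩ => ⟨(isAddCyclic_iff_not_le_torsionBy hH).2 hnle, hH⟩,
      fun ⟨hcyc, hH⟩ => ⟨hH, (isAddCyclic_iff_not_le_torsionBy hH).1 hcyc⟩⟩

theorem card_torsionBy_pow_succ [Finite G] (k : ℕ) :
    Nat.card (torsionBy G (p ^ (k + 1) : ℕ)) =
      Nat.card (torsionBy G (p ^ k : ℕ)) + Nat.card {x : G // addOrderOf x = p ^ (k + 1)} := by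
  rw [card_torsionBy_eq_card_nsmul_eq_zero, card_torsionBy_eq_card_nsmul_eq_zero,
    ← Nat.card_subtype_and_add_card_subtype_and_not _ (p ^ k • · = 0)]
  congr 1 <;> refine Nat.card_congr (Equiv.subtypeEquivRight fun x => ?_)
  · refine and_iff_right_of_imp fun h => ?_
    rw [pow_succ, mul_nsmul, h, nsmul_zero]
  · refine ⟨fun ⟨h1, h2⟩ => addOrderOf_eq_prime_pow h2 h1,
      fun h => ⟨h ▸ addOrderOf_nsmul_eq_zero x, ?_⟩⟩
    exact nsmul_ne_zero_of_lt_addOrderOf (pow_ne_zero k hp.out.ne_zero)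
      (h ▸ Nat.pow_lt_pow_right hp.out.one_lt k.lt_succ_self)

theorem card_torsionBy_pow_succ_eq_of_addEquiv {G' : Type*} [AddCommGroup G'] [Finite G]
    [Finite G'] {k : ℕ} (e : torsionBy G (p ^ k : ℕ) ≃+ torsionBy G' (p ^ k : ℕ))
    (h : numAddSubgroupsOfCard G (p ^ (k + 1)) = numAddSubgroupsOfCard G' (p ^ (k + 1))) :
    Nat.card (torsionBy G (p ^ (k + 1) : ℕ)) = Nat.card (torsionBy G' (p ^ (k + 1) : ℕ)) := by
  have hcyclic : Nat.card {H : AddSubgroup G // IsAddCyclic H ∧ Nat.card H = p ^ (k + 1)} =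
      Nat.card {H : AddSubgroup G' // IsAddCyclic H ∧ Nat.card H = p ^ (k + 1)} := by
    rw [numAddSubgroupsOfCard_pow_succ (G := G), numAddSubgroupsOfCard_pow_succ (G := G'),
      numAddSubgroupsOfCard_congr e] at h
    omega
  rw [card_torsionBy_pow_succ, card_torsionBy_pow_succ, card_addOrderOf_eq_mul_totient,
    card_addOrderOf_eq_mul_totient, hcyclic, Nat.card_congr e.toEquiv]

end Torsion

theorem Nat.gcd_pow_pow (p a b : ℕ) : (p ^ a).gcd (p ^ b) = p ^ min a b := by
  rcases le_total a b with h | h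
  · rw [min_eq_left h, Nat.gcd_eq_left (pow_dvd_pow p h)]
  · rw [min_eq_right h, Nat.gcd_eq_right (pow_dvd_pow p h)]

theorem ZMod.card_torsionBy_pow_pow (p : ℕ) [NeZero p] (a k : ℕ) :
    Nat.card (torsionBy (ZMod (p ^ a)) (p ^ k : ℕ)) = p ^ min a k := by
  rw [IsAddCyclic.card_torsionBy, Nat.card_zmod, Nat.gcd_pow_pow]

def AddSubgroup.torsionByPiAddEquiv {ι : Type*} (A : ι → Type*) [∀ i, AddCommGroup (A i)]
    (n : ℤ) :
    torsionBy (∀ i, A i) n ≃+ ∀ i, torsionBy (A i) n where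
  toFun x i := ⟨x.1 i, congrFun x.2 i⟩
  invFun y := ⟨fun i => y i, funext fun i => (y i).2⟩
  left_inv _ := rfl
  right_inv _ := rfl
  map_add' _ _ := rfl

def AddEquiv.piFinCast {m n : ℕ} (h : m = n) (A : Fin n → Type*) [∀ i, Add (A i)] :
    (∀ i, A i) ≃+ ∀ i : Fin m, A (Fin.cast h i) where
  toFun x i := x (Fin.cast h i)
  invFun y i := y (Fin.cast h.symm i)
  left_inv _ := rfl
  right_inv _ := rfl
  map_add' _ _ := rfl

/-- `G_λ(p)`; `Nk p l k` is by definition `numAddSubgroupsOfCard (PartitionGroup p l) (p ^ k)`. -/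
abbrev PartitionGroup (p : ℕ) (l : List ℕ) : Type :=
  ∀ i : Fin l.length, ZMod (p ^ l.get i)

section PartitionGroup

variable {p : ℕ} [NeZero p]

theorem card_torsionBy_partitionGroup (l : List ℕ) (j : ℕ) :
    Nat.card (torsionBy (PartitionGroup p l) (p ^ j : ℕ)) = p ^ (l.map (min · j)).sum := by
  rw [Nat.card_congr (AddSubgroup.torsionByPiAddEquiv _ _).toEquiv, Nat.card_pi]
  simp_rw [ZMod.card_torsionBy_pow_pow]
  rw [Finset.prod_pow_eq_pow_sum, ← List.sum_ofFn]
  exact congrArg (p ^ List.sum ·) (List.ofFn_getElem_eq_map l (min · j))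

theorem nonempty_torsionBy_addEquiv_of_map_min_eq {l m : List ℕ} {k : ℕ}
    (h : l.map (min · k) = m.map (min · k)) :
    Nonempty (torsionBy (PartitionGroup p l) (p ^ k : ℕ) ≃+
      torsionBy (PartitionGroup p m) (p ^ k : ℕ)) := by
  have hlen : l.length = m.length := by simpa using congrArg List.length h
  have hmin (i : Fin l.length) : min (l.get i) k = min (m.get (Fin.cast hlen i)) k := by
    simpa using List.getElem_of_eq h (by simp : i.1 < (l.map (min · k)).length)
  refine ⟨(AddSubgroup.torsionByPiAddEquiv _ _).trans <|
    (AddEquiv.piCongrRight fun i => addEquivOfAddCyclicCardEq ?_).trans <|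
    (AddEquiv.piFinCast hlen _).symm.trans (AddSubgroup.torsionByPiAddEquiv _ _).symm⟩
  rw [ZMod.card_torsionBy_pow_pow, ZMod.card_torsionBy_pow_pow, hmin]

end PartitionGroup

namespace List

theorem sum_map_min_succ (l : List ℕ) (k : ℕ) :
    (l.map (min · (k + 1))).sum = (l.map (min · k)).sum + l.countP (k + 1 ≤ ·) := by
  induction l with
  | nil => rfl
  | cons a l ih =>
    simp only [map_cons, sum_cons, countP_cons, ih, decide_eq_true_eq]
    split <;> omega

theorem sum_map_min_one {l : List ℕ} (hpos : ∀ x ∈ l, 0 < x) :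
    (l.map (min · 1)).sum = l.length := by
  rw [map_congr_left fun x hx => Nat.min_eq_right (hpos x hx), map_const', sum_replicate]
  simp

theorem map_min_succ_eq_of_countP_eq_zero {l : List ℕ} {k : ℕ}
    (h : l.countP (k + 1 ≤ ·) = 0) :
    l.map (min · (k + 1)) = l.map (min · k) :=
  map_congr_left fun x hx => by
    have := countP_eq_zero.1 h x hx
    simp only [decide_eq_true_eq] at this
    omega

theorem countP_eq_zero_of_pairwise_ge {a k : ℕ} {l : List ℕ}
    (hl : (a :: l).Pairwise (· ≥ ·)) (ha : a ≤ k) : (a :: l).countP (k + 1 ≤ ·) = 0 :=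
  countP_eq_zero.2 fun x hx => by
    have : x ≤ a := (mem_cons.1 hx).elim le_of_eq (rel_of_pairwise_cons hl)
    simp only [decide_eq_true_eq]
    omega

/- In a non-increasing list the parts `≥ k + 1` form an initial segment, so their number decides
where the truncation at `k + 1` differs from the truncation at `k`. -/
theorem map_min_succ_eq_of_map_min_eq {k : ℕ} : ∀ {l m : List ℕ}, l.Pairwise (· ≥ ·) →
    m.Pairwise (· ≥ ·) → l.map (min · k) = m.map (min · k) →
    l.countP (k + 1 ≤ ·) = m.countP (k + 1 ≤ ·) →
    l.map (min · (k + 1)) = m.map (min · (k + 1))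
  | [], [], _, _, _, _ => rfl
  | a :: l, b :: m, hl, hm, hmap, hcount => by
    by_cases hab : k + 1 ≤ a ∧ k + 1 ≤ b
    · simp only [map_cons, cons.injEq] at hmap ⊢
      refine ⟨by omega, map_min_succ_eq_of_map_min_eq hl.of_cons hm.of_cons hmap.2 ?_⟩
      simp only [countP_cons, decide_eq_true_eq, hab.1, hab.2, ite_true] at hcount
      omega
    · have hzero : (a :: l).countP (k + 1 ≤ ·) = 0 ∧ (b :: m).countP (k + 1 ≤ ·) = 0 := by
        rcases not_and_or.1 hab with ha | hb
        · have := countP_eq_zero_of_pairwise_ge hl (k := k) (by omega)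
          omega
        · have := countP_eq_zero_of_pairwise_ge hm (k := k) (by omega)
          omega
      rwa [map_min_succ_eq_of_countP_eq_zero hzero.1, map_min_succ_eq_of_countP_eq_zero hzero.2]

theorem eq_of_pairwise_ge_of_sum_map_min {l m : List ℕ} (hl : l.Pairwise (· ≥ ·))
    (hm : m.Pairwise (· ≥ ·)) (hlen : l.length = m.length)
    (hsum : ∀ k, l.map (min · k) = m.map (min · k) →
      (l.map (min · (k + 1))).sum = (m.map (min · (k + 1))).sum) : l = m := by
  have htrunc (k : ℕ) : l.map (min · k) = m.map (min · k) := by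
    induction k with
    | zero => simp [map_const', hlen]
    | succ k ih =>
      refine map_min_succ_eq_of_map_min_eq hl hm ih ?_
      have := hsum k ih
      rw [sum_map_min_succ, sum_map_min_succ, ih] at this
      omega
  have hid {xs : List ℕ} {K : ℕ} (hK : xs.sum ≤ K) : xs.map (min · K) = xs :=
    (map_congr_left fun x hx => min_eq_left ((le_sum_of_mem hx).trans hK)).trans (map_id' xs)
  rw [← hid (Nat.le_add_right l.sum m.sum), htrunc, hid (Nat.le_add_left m.sum l.sum)]

end List

/-- If two partitions `λ, μ` satisfy `N_k(λ; p) = N_k(μ; p)` for every `k`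
(i.e. `ζ_λ(s) = ζ_μ(s)`), then `λ = μ`:  the zeta function determines `λ`. -/
theorem stmt_16 (p : ℕ) (hp : p.Prime) (l m : List ℕ)
    (hsortl : l.Pairwise (· ≥ ·)) (hposl : ∀ x ∈ l, 0 < x)
    (hsortm : m.Pairwise (· ≥ ·)) (hposm : ∀ x ∈ m, 0 < x)
    (h : ∀ k : ℕ, Nk p l k = Nk p m k) :
    l = m := by
  have := Fact.mk hp
  have hsum (k : ℕ) (e : torsionBy (PartitionGroup p l) (p ^ k : ℕ) ≃+
      torsionBy (PartitionGroup p m) (p ^ k : ℕ)) :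
      (l.map (min · (k + 1))).sum = (m.map (min · (k + 1))).sum := by
    have := card_torsionBy_pow_succ_eq_of_addEquiv e (h (k + 1))
    rwa [card_torsionBy_partitionGroup, card_torsionBy_partitionGroup,
      (Nat.pow_right_injective hp.two_le).eq_iff] at this
  have hlen : l.length = m.length := by
    have (G : Type) [AddCommGroup G] : Unique (torsionBy G (p ^ 0 : ℕ)) :=
      { default := 0
        uniq := fun x => Subtype.ext (by simpa using AddSubgroup.torsionBy.nsmul_iff.1 x.2) }
    simpa only [List.sum_map_min_one hposl, List.sum_map_min_one hposm] using
      hsum 0 AddEquiv.ofUnique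
  exact List.eq_of_pairwise_ge_of_sum_map_min hsortl hsortm hlen fun k hk =>
    hsum k (nonempty_torsionBy_addEquiv_of_map_min_eq hk).some
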